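/- Consider a transient MDP and risk level β > 0 as in the context, and define the sequence w^{t,⋆} ∈ ℝ^S by w^{0,⋆} = −𝟙 and w^{t,⋆} = L⋆ w^{t−1,⋆}. Assume liminf_{t→∞} w^{t,⋆}_s > −∞ for every state s. Then: the limit w^{∞,⋆} = lim_{t→∞} w^{t,⋆} exists and is finite; there exists a deterministic decision rule d⋆ : S → A such that w^{∞,⋆} = L^{d⋆} w^{∞,⋆}; w^{∞,⋆} is the unique vector satisfying this fixed-point equation for L^{d⋆}; and w^{∞,⋆} equals the limit of the iterates obtained by repeatedly applying L^{d⋆} starting from −𝟙 (i.e., it is the exponential value of the stationary policy d⋆). -/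

import Mathlib

/-!
Let `W` and `m` be the componentwise `limsup` and `liminf` of the iterates; they are finite
because the iterates are nonpositive and eventually bounded below. Since `L⋆` is monotone and continuous, `W ≤ L⋆ W` and
`L⋆ m ≤ m`. Take `d` greedy for `W`, so that `W ≤ L^d W = B^d W − b^d` with `W ≤ 0`. If `W`
vanished somewhere, its zero set would be closed under the transitions of `d` and have no
termination probability, so `1` would be an eigenvalue of `P^d`, against transience. Hence
`z = −W > 0` satisfies `B^d z + b^d ≤ z`, and the same closed-class argument applied to
`lim (B^d)^k z` shows `(B^d)^k → 0`. Then `W − m ≤ B^d (W − m)` forces `W ≤ m`, so the iterates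
converge to `W`, which is the fixed point of `L^d`, and `(B^d)^k → 0` makes it the unique one
and the limit of the iterates of `L^d`.
-/

set_option autoImplicit false

open Finset Filter

noncomputable section

/-- The spectral radius of a real square matrix: the maximum modulus of its complex
eigenvalues. -/
def specRad {n : Type*} [Fintype n] [DecidableEq n] (M : Matrix n n ℝ) : ℝ :=
  sSup {x : ℝ | ∃ z : ℂ, z ∈ spectrum ℂ (M.map (Complex.ofReal : ℝ → ℂ)) ∧ x = ‖z‖}

/-- Termination probability `p_e(s,a) = 1 − Σ_{s'} p(s,a,s')` of a substochastic kernel. -/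
def termProb {S A : Type*} [Fintype S] (p : S → A → S → ℝ) (s : S) (a : A) : ℝ :=
  1 - ∑ s' : S, p s a s'

/-- The affine exponential Bellman operator `L^d w = B^d w − b^d` of a deterministic
decision rule `d`, with `B^d_{s,s'} = p(s,d(s),s')·exp(−β·r(s,d(s),s'))` and
`b^d_s = p_e(s,d(s))·exp(−β·r_e(s,d(s)))`. -/
def expBellman {S A : Type*} [Fintype S] (p : S → A → S → ℝ) (r : S → A → S → ℝ)
    (re : S → A → ℝ) (β : ℝ) (d : S → A) (w : S → ℝ) : S → ℝ :=
  fun s => (∑ s' : S, p s (d s) s' * Real.exp (-β * r s (d s) s') * w s')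
    - termProb p s (d s) * Real.exp (-β * re s (d s))

/-- The optimal exponential Bellman operator
`(L⋆ w)(s) = max_a ( Σ_{s'} p(s,a,s')·exp(−β·r(s,a,s'))·w_{s'} − p_e(s,a)·exp(−β·r_e(s,a)) )`. -/
def expBellmanOpt {S A : Type*} [Fintype S] [Fintype A] [Nonempty A] (p : S → A → S → ℝ)
    (r : S → A → S → ℝ) (re : S → A → ℝ) (β : ℝ) (w : S → ℝ) : S → ℝ :=
  fun s => ⨆ a : A, ((∑ s' : S, p s a s' * Real.exp (-β * r s a s') * w s')
    - termProb p s a * Real.exp (-β * re s a))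

open Topology Matrix

section NonnegMatrix

variable {n : Type*} [Fintype n] {B : Matrix n n ℝ}

theorem mulVec_mono_of_nonneg (hB : ∀ i j, 0 ≤ B i j) : Monotone (B *ᵥ ·) :=
  fun _ _ h i => dotProduct_le_dotProduct_of_nonneg_left h (hB i)

theorem eq_zero_of_mulVec_apply_eq_zero (hB : ∀ i j, 0 ≤ B i j) {g : n → ℝ} (hg : 0 ≤ g)
    {i j : n} (hi : (B *ᵥ g) i = 0) (hij : B i j ≠ 0) : g j = 0 :=
  (mul_eq_zero.1 ((Finset.sum_eq_zero_iff_of_nonneg fun k _ => mul_nonneg (hB i k) (hg k)).1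
    hi j (mem_univ j))).resolve_left hij

variable [DecidableEq n]

theorem pow_succ_mulVec (k : ℕ) (v : n → ℝ) : B ^ (k + 1) *ᵥ v = B *ᵥ (B ^ k *ᵥ v) := by
  rw [pow_succ', mulVec_mulVec]

theorem pow_mulVec_mono_of_nonneg (hB : ∀ i j, 0 ≤ B i j) (k : ℕ) : Monotone (B ^ k *ᵥ ·) := by
  intro u v h
  induction k with
  | zero => simpa using h
  | succ k ih => simpa only [pow_succ_mulVec] using mulVec_mono_of_nonneg hB ih

theorem nonpos_of_le_mulVec (hB : ∀ i j, 0 ≤ B i j) {x : n → ℝ} (hx : x ≤ B *ᵥ x)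
    (hlim : Tendsto (fun k => B ^ k *ᵥ x) atTop (𝓝 0)) : x ≤ 0 := by
  refine ge_of_tendsto' hlim fun k => ?_
  induction k with
  | zero => simp
  | succ k ih => exact hx.trans (pow_succ_mulVec k x ▸ mulVec_mono_of_nonneg hB ih)

theorem exists_fixed_tendsto_pow_mulVec (hB : ∀ i j, 0 ≤ B i j) {z : n → ℝ} (hz0 : 0 ≤ z)
    (hz : B *ᵥ z ≤ z) :
    ∃ y, 0 ≤ y ∧ B *ᵥ y = y ∧ Tendsto (fun k => B ^ k *ᵥ z) atTop (𝓝 y) := by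
  have hpos : ∀ k, 0 ≤ B ^ k *ᵥ z := fun k => by
    simpa using pow_mulVec_mono_of_nonneg hB k hz0
  have hanti : Antitone fun k => B ^ k *ᵥ z := antitone_nat_of_succ_le fun k => by
    simpa only [pow_succ, ← mulVec_mulVec] using pow_mulVec_mono_of_nonneg hB k hz
  have hlim := tendsto_atTop_ciInf hanti ⟨0, Set.forall_mem_range.2 hpos⟩
  refine ⟨_, le_ciInf hpos, tendsto_nhds_unique ?_ ((tendsto_add_atTop_iff_nat 1).2 hlim), hlim⟩
  simpa only [Function.comp_def, id, pow_succ_mulVec] using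
    ((continuous_const.matrix_mulVec continuous_id).tendsto _).comp hlim

theorem tendsto_pow_mulVec_zero_of_dominated (hB : ∀ i j, 0 ≤ B i j) {z : n → ℝ}
    (hz : ∀ i, 0 < z i) (hlim : Tendsto (fun k => B ^ k *ᵥ z) atTop (𝓝 0)) (v : n → ℝ) :
    Tendsto (fun k => B ^ k *ᵥ v) atTop (𝓝 0) := by
  obtain ⟨C, hC⟩ := (Set.finite_range fun i => |v i| / z i).bddAbove
  have hv : ∀ i, |v i| ≤ (C • z) i := fun i => (div_le_iff₀ (hz i)).1 (hC ⟨i, rfl⟩)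
  have hbound : ∀ k i, |(B ^ k *ᵥ v) i| ≤ C * (B ^ k *ᵥ z) i := fun k i => by
    have hle : B ^ k *ᵥ v ≤ B ^ k *ᵥ (C • z) :=
      pow_mulVec_mono_of_nonneg hB k fun i => le_of_abs_le (hv i)
    have hge : B ^ k *ᵥ (-(C • z)) ≤ B ^ k *ᵥ v :=
      pow_mulVec_mono_of_nonneg hB k fun i => neg_le_of_abs_le (hv i)
    rw [mulVec_smul] at hle
    rw [mulVec_neg, mulVec_smul] at hge
    exact abs_le.2 ⟨hge i, hle i⟩
  refine tendsto_pi_nhds.2 fun i => squeeze_zero_norm (fun k => hbound k i) ?_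
  simpa using ((continuous_apply i).tendsto _ |>.comp hlim).const_mul C

theorem iterate_mulVec_sub_sub_fixedPoint {b W : n → ℝ} (hW : B *ᵥ W - b = W) (k : ℕ)
    (v : n → ℝ) : (fun u => B *ᵥ u - b)^[k] v - W = B ^ k *ᵥ (v - W) := by
  induction k with
  | zero => simp
  | succ k ih =>
    rw [Function.iterate_succ_apply', pow_succ_mulVec, ← ih, mulVec_sub]
    conv_lhs => rw [← hW]
    abel

theorem tendsto_iterate_mulVec_sub {b W : n → ℝ} (hW : B *ᵥ W - b = W)
    (hB : ∀ v, Tendsto (fun k => B ^ k *ᵥ v) atTop (𝓝 0)) (v : n → ℝ) :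
    Tendsto (fun k => (fun u => B *ᵥ u - b)^[k] v) atTop (𝓝 W) := by
  simpa [← iterate_mulVec_sub_sub_fixedPoint hW] using (hB (v - W)).const_add W

theorem eq_of_mulVec_sub_eq_self {b W : n → ℝ} (hW : B *ᵥ W - b = W)
    (hB : ∀ v, Tendsto (fun k => B ^ k *ᵥ v) atTop (𝓝 0)) {u : n → ℝ}
    (hu : B *ᵥ u - b = u) : u = W :=
  tendsto_nhds_unique (by simp [Function.iterate_fixed (f := fun u => B *ᵥ u - b) hu])
    (tendsto_iterate_mulVec_sub hW hB u)

end NonnegMatrix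

/-- `1 - P` is block triangular with respect to `M`, and its `M`-block kills the all-ones
vector. -/
theorem det_one_sub_eq_zero_of_closed_stochastic {n R : Type*} [Fintype n] [DecidableEq n]
    [CommRing R] [IsDomain R] (P : Matrix n n R) {M : Set n} [DecidablePred (· ∈ M)]
    (hne : M.Nonempty) (hclosed : ∀ i ∈ M, ∀ j ∉ M, P i j = 0)
    (hrow : ∀ i ∈ M, ∑ j, P i j = 1) : (1 - P).det = 0 := by
  have hblock : ∀ i ∈ M, ∀ j ∉ M, (1 - P) i j = 0 := fun i hi j hj => by
    rw [Matrix.sub_apply, one_apply_ne (ne_of_mem_of_not_mem hi hj), hclosed i hi j hj, sub_zero]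
  obtain ⟨i₀, hi₀⟩ := hne
  have hM : ((1 - P).toSquareBlockProp (· ∈ M)).det = 0 := by
    refine exists_mulVec_eq_zero_iff.1 ⟨1, fun h => one_ne_zero (congrFun h ⟨i₀, hi₀⟩), ?_⟩
    funext i
    have hout : ∑ j : {j // j ∉ M}, (1 - P) i j = 0 :=
      Finset.sum_eq_zero fun j _ => hblock i i.2 j j.2
    have hall : ∑ j, (1 - P) i j = 0 := by
      simp [Matrix.sub_apply, Finset.sum_sub_distrib, Matrix.one_apply, hrow i i.2]
    have hsum := Fintype.sum_subtype_add_sum_subtype (· ∈ M) fun j => (1 - P) i j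
    rw [hout, add_zero, hall] at hsum
    simpa [mulVec, dotProduct, toSquareBlockProp] using hsum
  rw [twoBlockTriangular_det' _ (· ∈ M) hblock, hM, zero_mul]

theorem one_le_specRad_of_det_one_sub_eq_zero {n : Type*} [Fintype n] [DecidableEq n]
    {P : Matrix n n ℝ} (h : (1 - P).det = 0) : 1 ≤ specRad P := by
  have hdet : (1 - P.map Complex.ofReal).det = 0 := by
    have := Complex.ofRealHom.map_det (1 - P)
    rw [h, map_zero, RingHom.mapMatrix_apply, Matrix.map_sub _ (map_sub _),
      Matrix.map_one _ (map_zero _) (map_one _)] at this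
    exact this.symm
  have hmem : (1 : ℂ) ∈ spectrum ℂ (P.map Complex.ofReal) := by
    rw [spectrum.mem_iff, map_one, isUnit_iff_isUnit_det, hdet]
    exact not_isUnit_zero
  refine le_csSup (Set.Finite.bddAbove ?_) ⟨1, hmem, by simp⟩
  exact ((finite_spectrum _).image fun z : ℂ => ‖z‖).subset
    fun _ ⟨z, hz, hx⟩ => ⟨z, hz, hx.symm⟩

theorem limsup_le_map_limsup {ι α : Type*} [Finite ι] [ConditionallyCompleteLinearOrder α]
    [TopologicalSpace α] [OrderTopology α] [DenselyOrdered α] [NoMaxOrder α]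
    {F : (ι → α) → ι → α} (hF : Monotone F) (hFc : Continuous F) {w : ℕ → ι → α}
    (hw : ∀ t, w (t + 1) = F (w t))
    (hu : ∀ i, IsBoundedUnder (· ≤ ·) atTop fun t => w t i)
    (hl : ∀ i, IsBoundedUnder (· ≥ ·) atTop fun t => w t i) :
    (fun i => limsup (fun t => w t i) atTop) ≤ F fun i => limsup (fun t => w t i) atTop := by
  set W := fun i => limsup (fun t => w t i) atTop
  -- eventually `w t ≤ x` for every `x` strictly above `W`, so `W ≤ F x`; then let `x` tend to `W`
  have above : ∀ x ∈ Set.univ.pi fun i => Set.Ioi (W i), W ≤ F x := by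
    intro x hx i
    have hlt : ∀ᶠ t in atTop, w t ≤ x := eventually_all.2 fun j =>
      (eventually_lt_of_limsup_lt (hx j trivial) (hu j)).mono fun _ h => h.le
    have hnext : ∀ᶠ t in atTop, w t i ≤ F x i := by
      rw [← map_add_atTop_eq_nat 1, eventually_map]
      exact hlt.mono fun t h => by rw [hw]; exact hF h i
    exact limsup_le_of_le (hl i).isCoboundedUnder_le hnext
  exact ge_of_tendsto (hFc.continuousWithinAt (s := Set.univ.pi fun i => Set.Ioi (W i)))
    (eventually_mem_nhdsWithin.mono above)

theorem map_liminf_le {ι α : Type*} [Finite ι] [ConditionallyCompleteLinearOrder α]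
    [TopologicalSpace α] [OrderTopology α] [DenselyOrdered α] [NoMinOrder α]
    {F : (ι → α) → ι → α} (hF : Monotone F) (hFc : Continuous F) {w : ℕ → ι → α}
    (hw : ∀ t, w (t + 1) = F (w t))
    (hu : ∀ i, IsBoundedUnder (· ≤ ·) atTop fun t => w t i)
    (hl : ∀ i, IsBoundedUnder (· ≥ ·) atTop fun t => w t i) :
    F (fun i => liminf (fun t => w t i) atTop) ≤ fun i => liminf (fun t => w t i) atTop :=
  @limsup_le_map_limsup ι αᵒᵈ _ inferInstance inferInstance inferInstance inferInstance
    inferInstance (F : (ι → αᵒᵈ) → ι → αᵒᵈ) (fun _ _ h => hF h) hFc (w : ℕ → ι → αᵒᵈ) hw hl hu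

theorem isBoundedUnder_ge_of_bot_lt_liminf {ι : Type*} {l : Filter ι} {u : ι → ℝ}
    (h : ⊥ < liminf (fun t => (u t : EReal)) l) : IsBoundedUnder (· ≥ ·) l u := by
  obtain ⟨x, -, hx⟩ := EReal.lt_iff_exists_real_btwn.1 h
  exact isBoundedUnder_of_eventually_ge
    ((eventually_lt_of_lt_liminf hx).mono fun _ ht => (EReal.coe_lt_coe_iff.1 ht).le)

section ExpBellman

variable {S A : Type*} (p : S → A → S → ℝ) (r : S → A → S → ℝ) (re : S → A → ℝ) (β : ℝ)

/-- The matrix `B^d` of `L^d w = B^d w − b^d`; `expTerm` below is the vector `b^d`. -/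
def expMat (d : S → A) : Matrix S S ℝ :=
  of fun s s' => p s (d s) s' * Real.exp (-β * r s (d s) s')

theorem expMat_nonneg {p : S → A → S → ℝ} (hp0 : ∀ s a s', 0 ≤ p s a s') (d : S → A)
    (s s' : S) : 0 ≤ expMat p r β d s s' :=
  mul_nonneg (hp0 _ _ _) (Real.exp_pos _).le

theorem expMat_ne_zero_iff {p : S → A → S → ℝ} {d : S → A} {s s' : S} :
    expMat p r β d s s' ≠ 0 ↔ p s (d s) s' ≠ 0 := by
  simp [expMat, Real.exp_ne_zero]

variable [Fintype S]

def expTerm (d : S → A) : S → ℝ :=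
  fun s => termProb p s (d s) * Real.exp (-β * re s (d s))

theorem expBellman_eq_mulVec_sub (d : S → A) :
    expBellman p r re β d = fun w => expMat p r β d *ᵥ w - expTerm p re β d :=
  rfl

variable {p}

theorem expTerm_nonneg (hsub : ∀ s a, ∑ s' : S, p s a s' ≤ 1) (d : S → A) :
    0 ≤ expTerm p re β d :=
  fun s => mul_nonneg (sub_nonneg.2 (hsub s (d s))) (Real.exp_pos _).le

theorem expBellman_mono (hp0 : ∀ s a s', 0 ≤ p s a s') (d : S → A) :
    Monotone (expBellman p r re β d) :=
  fun _ _ h => sub_le_sub_right (mulVec_mono_of_nonneg (expMat_nonneg r β hp0 d) h) _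

theorem exists_termProb_ne_zero_of_closed [DecidableEq S] {d : S → A}
    (htrans : specRad (of fun s s' => p s (d s) s') < 1) {M : Set S} (hne : M.Nonempty)
    (hclosed : ∀ s ∈ M, ∀ s', p s (d s) s' ≠ 0 → s' ∈ M) :
    ∃ s ∈ M, termProb p s (d s) ≠ 0 := by
  classical
  by_contra! h
  refine htrans.not_ge (one_le_specRad_of_det_one_sub_eq_zero ?_)
  refine det_one_sub_eq_zero_of_closed_stochastic _ hne (fun s hs s' hs' => ?_) fun s hs => ?_
  · by_contra hp
    exact hs' (hclosed s hs s' hp)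
  · have := h s hs
    rw [termProb] at this
    simp only [of_apply]
    linarith

/-- The zero set of `x` would be closed under the transitions of `d` and have no termination
probability, which transience forbids. -/
theorem neg_of_le_expMat_mulVec_sub [DecidableEq S] (hp0 : ∀ s a s', 0 ≤ p s a s')
    (hsub : ∀ s a, ∑ s' : S, p s a s' ≤ 1) {d : S → A}
    (htrans : specRad (of fun s s' => p s (d s) s') < 1) {κ : ℝ} (hκ : 0 < κ) {x : S → ℝ}
    (hx0 : x ≤ 0) (hx : x ≤ expMat p r β d *ᵥ x - κ • expTerm p re β d) (s : S) : x s < 0 := by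
  have hB := expMat_nonneg r β hp0 d
  have hBx : expMat p r β d *ᵥ x ≤ 0 := by simpa using mulVec_mono_of_nonneg hB hx0
  have hzero : ∀ t, x t = 0 → (expMat p r β d *ᵥ x) t = 0 ∧ expTerm p re β d t = 0 := by
    intro t ht
    have hxt : 0 ≤ (expMat p r β d *ᵥ x) t - κ * expTerm p re β d t := ht ▸ hx t
    have hBxt : (expMat p r β d *ᵥ x) t ≤ 0 := hBx t
    have hb : 0 ≤ κ * expTerm p re β d t := mul_nonneg hκ.le (expTerm_nonneg re β hsub d t)
    refine ⟨by linarith, (mul_eq_zero.1 ?_).resolve_left hκ.ne'⟩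
    linarith
  refine (hx0 s).lt_of_ne fun hs => ?_
  obtain ⟨t, ht, hterm⟩ := exists_termProb_ne_zero_of_closed htrans (M := {t | x t = 0}) ⟨s, hs⟩
    fun t ht s' hp => by
      have hBnx : (expMat p r β d *ᵥ -x) t = 0 := by simp [mulVec_neg, (hzero t ht).1]
      simpa using eq_zero_of_mulVec_apply_eq_zero hB (neg_nonneg.2 hx0) hBnx
        ((expMat_ne_zero_iff r β).2 hp)
  simpa [expTerm, hterm, Real.exp_ne_zero] using (hzero t ht).2

/-- The limit `y` of `B^k z` is `B`-invariant; were it nonzero, `y - α • z` with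
`α = max (y / z)` would be a nonpositive subsolution vanishing somewhere. -/
theorem tendsto_expMat_pow_mulVec_zero [DecidableEq S] (hp0 : ∀ s a s', 0 ≤ p s a s')
    (hsub : ∀ s a, ∑ s' : S, p s a s' ≤ 1) {d : S → A}
    (htrans : specRad (of fun s s' => p s (d s) s') < 1) {z : S → ℝ} (hz : ∀ s, 0 < z s)
    (hsuper : expMat p r β d *ᵥ z + expTerm p re β d ≤ z) (v : S → ℝ) :
    Tendsto (fun k => expMat p r β d ^ k *ᵥ v) atTop (𝓝 0) := by
  have hB := expMat_nonneg r β hp0 d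
  have hb := expTerm_nonneg re β hsub d
  obtain ⟨y, hy0, hyfix, hlim⟩ := exists_fixed_tendsto_pow_mulVec hB (fun s => (hz s).le)
    fun s => le_of_add_le_of_nonneg_left (hsuper s) (hb s)
  refine tendsto_pow_mulVec_zero_of_dominated hB hz ?_ v
  suffices y = 0 from this ▸ hlim
  by_contra hne
  obtain ⟨s₀, hs₀⟩ := Function.ne_iff.1 hne
  have : Nonempty S := ⟨s₀⟩
  obtain ⟨s₁, hs₁⟩ := Finite.exists_max fun s => y s / z s
  set α := y s₁ / z s₁
  have hα : 0 < α := (div_pos ((hy0 s₀).lt_of_ne' hs₀) (hz s₀)).trans_le (hs₁ s₀)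
  have hle : y - α • z ≤ 0 := fun s => by
    simpa [sub_nonpos, ← div_le_iff₀ (hz s)] using hs₁ s
  have hsubsol : y - α • z ≤ expMat p r β d *ᵥ (y - α • z) - α • expTerm p re β d := by
    rw [mulVec_sub, mulVec_smul, hyfix]
    intro s
    have := mul_le_mul_of_nonneg_left (hsuper s) hα.le
    simp only [Pi.add_apply] at this
    simp only [Pi.sub_apply, Pi.smul_apply, smul_eq_mul]
    linarith
  have := neg_of_le_expMat_mulVec_sub r re β hp0 hsub htrans hα hle hsubsol s₁
  simp [α, div_mul_cancel₀ _ (hz s₁).ne'] at this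

end ExpBellman

section ExpBellmanOpt

variable {S A : Type*} [Fintype S] [Fintype A] [Nonempty A] (p : S → A → S → ℝ)
  (r : S → A → S → ℝ) (re : S → A → ℝ) (β : ℝ)

theorem expBellman_le_expBellmanOpt (d : S → A) (w : S → ℝ) :
    expBellman p r re β d w ≤ expBellmanOpt p r re β w :=
  fun s => le_ciSup (f := fun a => expBellman p r re β (fun _ => a) w s)
    (Set.finite_range _).bddAbove (d s)

theorem exists_expBellmanOpt_eq_expBellman (w : S → ℝ) :
    ∃ d, expBellmanOpt p r re β w = expBellman p r re β d w := by
  choose d hd using fun s => Finite.exists_max fun a => expBellman p r re β (fun _ => a) w s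
  exact ⟨d, funext fun s =>
    le_antisymm (ciSup_le (hd s)) (expBellman_le_expBellmanOpt p r re β d w s)⟩

theorem continuous_expBellmanOpt : Continuous (expBellmanOpt p r re β) := by
  refine continuous_pi fun s => ?_
  simp only [expBellmanOpt, ← Finset.sup'_univ_eq_ciSup]
  exact Continuous.finset_sup'_apply _ fun a _ => by fun_prop

variable {p}

theorem expBellmanOpt_mono (hp0 : ∀ s a s', 0 ≤ p s a s') :
    Monotone (expBellmanOpt p r re β) := fun u v h => by
  obtain ⟨d, hd⟩ := exists_expBellmanOpt_eq_expBellman p r re β u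
  exact hd ▸ (expBellman_mono r re β hp0 d h).trans (expBellman_le_expBellmanOpt p r re β d v)

theorem expBellmanOpt_nonpos (hp0 : ∀ s a s', 0 ≤ p s a s')
    (hsub : ∀ s a, ∑ s' : S, p s a s' ≤ 1) {w : S → ℝ} (hw : w ≤ 0) :
    expBellmanOpt p r re β w ≤ 0 := by
  obtain ⟨d, hd⟩ := exists_expBellmanOpt_eq_expBellman p r re β w
  have hBw : expMat p r β d *ᵥ w ≤ expMat p r β d *ᵥ 0 :=
    mulVec_mono_of_nonneg (expMat_nonneg r β hp0 d) hw
  rw [mulVec_zero] at hBw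
  rw [hd, expBellman_eq_mulVec_sub]
  exact sub_nonpos_of_le (hBw.trans (expTerm_nonneg re β hsub d))

variable [DecidableEq S]

theorem exists_stable_expBellmanOpt_eq_expBellman (hp0 : ∀ s a s', 0 ≤ p s a s')
    (hsub : ∀ s a, ∑ s' : S, p s a s' ≤ 1)
    (htrans : ∀ d : S → A, specRad (of fun s s' => p s (d s) s') < 1) {W : S → ℝ}
    (hW0 : W ≤ 0) (hW : W ≤ expBellmanOpt p r re β W) :
    ∃ d, expBellmanOpt p r re β W = expBellman p r re β d W ∧
      ∀ v, Tendsto (fun k => expMat p r β d ^ k *ᵥ v) atTop (𝓝 0) := by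
  obtain ⟨d, hd⟩ := exists_expBellmanOpt_eq_expBellman p r re β W
  have hWsub : W ≤ expMat p r β d *ᵥ W - expTerm p re β d := hW.trans_eq hd
  have hWneg := neg_of_le_expMat_mulVec_sub r re β hp0 hsub (htrans d) one_pos hW0
    (by simpa using hWsub)
  refine ⟨d, hd, tendsto_expMat_pow_mulVec_zero r re β hp0 hsub (htrans d) (z := -W)
    (fun s => neg_pos.2 (hWneg s)) fun s => ?_⟩
  have := hWsub s
  simp only [mulVec_neg, Pi.add_apply, Pi.neg_apply, Pi.sub_apply] at this ⊢
  linarith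

theorem le_of_le_expBellmanOpt_of_expBellmanOpt_le (hp0 : ∀ s a s', 0 ≤ p s a s')
    {d : S → A} {W m : S → ℝ} (hd : expBellmanOpt p r re β W = expBellman p r re β d W)
    (hB : ∀ v, Tendsto (fun k => expMat p r β d ^ k *ᵥ v) atTop (𝓝 0))
    (hW : W ≤ expBellmanOpt p r re β W) (hm : expBellmanOpt p r re β m ≤ m) : W ≤ m := by
  refine sub_nonpos.1 (nonpos_of_le_mulVec (expMat_nonneg r β hp0 d) (fun s => ?_) (hB _))
  have hWs : W s ≤ expBellman p r re β d W s := (hW.trans_eq hd) s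
  have hms : expBellman p r re β d m s ≤ m s :=
    (expBellman_le_expBellmanOpt p r re β d m).trans hm s
  simp only [expBellman_eq_mulVec_sub, mulVec_sub, Pi.sub_apply] at hWs hms ⊢
  linarith

end ExpBellmanOpt

theorem optimal_exp_value_iteration_converges_general {S A : Type*}
    [Fintype S] [DecidableEq S] [Fintype A] [Nonempty A]
    (p : S → A → S → ℝ) (r : S → A → S → ℝ) (re : S → A → ℝ) (β : ℝ)
    (hp0 : ∀ s a s', 0 ≤ p s a s') (hsub : ∀ s a, ∑ s' : S, p s a s' ≤ 1)
    (htrans : ∀ d : S → A, specRad (Matrix.of fun s s' => p s (d s) s') < 1)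
    (w : ℕ → S → ℝ) (hw0 : w 0 = fun _ => -1)
    (hwrec : ∀ t : ℕ, w (t + 1) = expBellmanOpt p r re β (w t))
    (hbdd : ∀ s : S, (⊥ : EReal) < Filter.liminf (fun t : ℕ => ((w t s : ℝ) : EReal))
      Filter.atTop) :
    ∃ (winf : S → ℝ) (dstar : S → A),
      Filter.Tendsto w Filter.atTop (nhds winf) ∧
      expBellman p r re β dstar winf = winf ∧
      (∀ u : S → ℝ, expBellman p r re β dstar u = u → u = winf) ∧
      Filter.Tendsto (fun t : ℕ => (expBellman p r re β dstar)^[t] (fun _ => (-1 : ℝ)))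
        Filter.atTop (nhds winf) := by
  have hnonpos : ∀ t, w t ≤ 0 := by
    intro t
    induction t with
    | zero => exact hw0 ▸ fun _ => by norm_num
    | succ t ih => exact hwrec t ▸ expBellmanOpt_nonpos r re β hp0 hsub ih
  have hub : ∀ s, IsBoundedUnder (· ≤ ·) atTop fun t => w t s :=
    fun s => isBoundedUnder_of ⟨0, fun t => hnonpos t s⟩
  have hlb : ∀ s, IsBoundedUnder (· ≥ ·) atTop fun t => w t s :=
    fun s => isBoundedUnder_ge_of_bot_lt_liminf (hbdd s)
  have hmono := expBellmanOpt_mono r re β hp0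
  set W := fun s => limsup (fun t => w t s) atTop
  set m := fun s => liminf (fun t => w t s) atTop
  have hW : W ≤ expBellmanOpt p r re β W :=
    limsup_le_map_limsup hmono (continuous_expBellmanOpt p r re β) hwrec hub hlb
  have hm : expBellmanOpt p r re β m ≤ m :=
    map_liminf_le hmono (continuous_expBellmanOpt p r re β) hwrec hub hlb
  have hmW : m ≤ W := fun s => liminf_le_limsup (hub s) (hlb s)
  have hW0 : W ≤ 0 := fun s =>
    limsup_le_of_le (hlb s).isCoboundedUnder_le (.of_forall fun t => hnonpos t s)
  obtain ⟨d, hd, hB⟩ := exists_stable_expBellmanOpt_eq_expBellman r re β hp0 hsub htrans hW0 hW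
  have hWm := le_of_le_expBellmanOpt_of_expBellmanOpt_le r re β hp0 hd hB hW hm
  have hfix : expMat p r β d *ᵥ W - expTerm p re β d = W :=
    le_antisymm (hd.symm.trans_le ((hmono hWm).trans (hm.trans hmW))) (hW.trans_eq hd)
  refine ⟨W, d, tendsto_pi_nhds.2 fun s => tendsto_of_liminf_eq_limsup
    (le_antisymm (hmW s) (hWm s)) rfl (hub s) (hlb s), hfix,
    fun u hu => eq_of_mulVec_sub_eq_self hfix hB hu, ?_⟩
  rw [expBellman_eq_mulVec_sub]
  exact tendsto_iterate_mulVec_sub hfix hB _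

/-- In a transient MDP, if the optimal exponential value iterates `w^{t,⋆}` (starting from
`−𝟙`) have all components with `liminf > −∞`, then they converge to a finite limit `w^{∞,⋆}`,
there is a deterministic decision rule `d⋆` with `w^{∞,⋆} = L^{d⋆} w^{∞,⋆}`, the limit is the
unique fixed point of `L^{d⋆}`, and it equals the limit of iterating `L^{d⋆}` from `−𝟙`
(the exponential value of the stationary policy `d⋆`). -/
theorem optimal_exp_value_iteration_converges {S A : Type*}
    [Fintype S] [DecidableEq S] [Fintype A] [Nonempty A]
    (p : S → A → S → ℝ) (r : S → A → S → ℝ) (re : S → A → ℝ) (β : ℝ) (hβ : 0 < β)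
    (hp0 : ∀ s a s', 0 ≤ p s a s') (hsub : ∀ s a, ∑ s' : S, p s a s' ≤ 1)
    (htrans : ∀ d : S → A, specRad (Matrix.of fun s s' => p s (d s) s') < 1)
    (w : ℕ → S → ℝ) (hw0 : w 0 = fun _ => -1)
    (hwrec : ∀ t : ℕ, w (t + 1) = expBellmanOpt p r re β (w t))
    (hbdd : ∀ s : S, (⊥ : EReal) < Filter.liminf (fun t : ℕ => ((w t s : ℝ) : EReal))
      Filter.atTop) :
    ∃ (winf : S → ℝ) (dstar : S → A),
      Filter.Tendsto w Filter.atTop (nhds winf) ∧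
      expBellman p r re β dstar winf = winf ∧
      (∀ u : S → ℝ, expBellman p r re β dstar u = u → u = winf) ∧
      Filter.Tendsto (fun t : ℕ => (expBellman p r re β dstar)^[t] (fun _ => (-1 : ℝ)))
        Filter.atTop (nhds winf) :=
  optimal_exp_value_iteration_converges_general p r re β hp0 hsub htrans w hw0 hwrec hbdd
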